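/- Let n ≥ 5 be odd, r_n = sqrt(sec(π/n)), m = (0,0,1)ᵀ (the maximally mixed state of the n-gon), and for p ∈ [0,1] let W_p = p·I₃ + (1−p)·m mᵀ (a Werner-like mixture of the maximally entangled state Φ_J = I₃ with noise). Consider the bipartite effect matrix Ē = m mᵀ − (1/(1+r_n²))·I₃. Then: (i) Tr[Ēᵀ (ω_i ω_jᵀ)] ≥ 0 for all i, j ∈ {1,…,n}, so Ē is nonnegative on every product state; (ii) Tr[Ēᵀ W_p] = (r_n² − 2p)/(1 + r_n²), which is negative exactly when p > r_n²/2; (iii) consequently, for every p with r_n²/2 < p ≤ 1, the state W_p does not belong to the convex hull of the product states {ω_i ω_jᵀ : i, j ∈ {1,…,n}}, i.e., W_p is entangled (and mixed for p < 1). -/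
import Mathlib


open Real Matrix

/-- `r_n = sqrt(sec(π/n))`. -/
noncomputable def rpoly (n : ℕ) : ℝ := Real.sqrt (1 / Real.cos (Real.pi / n))

/-- Pure states of the `n`-gon model: `ω_i = (r_n cos(2πi/n), r_n sin(2πi/n), 1)ᵀ`. -/
noncomputable def omegaP (n i : ℕ) : Fin 3 → ℝ :=
  ![rpoly n * Real.cos (2 * Real.pi * i / n), rpoly n * Real.sin (2 * Real.pi * i / n), 1]

/-- The maximally mixed state `m = (0,0,1)ᵀ` of the `n`-gon. -/
noncomputable def mMix : Fin 3 → ℝ := ![0, 0, 1]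

/-- The Werner-like state `W_p = p·Φ_J + (1−p)·m mᵀ` for odd gons, with `Φ_J = I₃`. -/
noncomputable def Wodd (p : ℝ) : Matrix (Fin 3) (Fin 3) ℝ :=
  p • (1 : Matrix (Fin 3) (Fin 3) ℝ) + (1 - p) • vecMulVec mMix mMix

/-- The entangled effect `Ē = m mᵀ − (1/(1+r_n²))·I₃` for the odd `n`-gon. -/
noncomputable def Ebar (n : ℕ) : Matrix (Fin 3) (Fin 3) ℝ :=
  vecMulVec mMix mMix - (1 / (1 + rpoly n ^ 2)) • (1 : Matrix (Fin 3) (Fin 3) ℝ)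

/-- The product states `ω_i ω_jᵀ` of the bipartite `n`-gon. -/
def productStates (n : ℕ) : Set (Matrix (Fin 3) (Fin 3) ℝ) :=
  {Φ | ∃ i ∈ Finset.Icc 1 n, ∃ j ∈ Finset.Icc 1 n, Φ = vecMulVec (omegaP n i) (omegaP n j)}

lemma trace_formula (n : ℕ) (u v : Fin 3 → ℝ) :
    ((Ebar n)ᵀ * vecMulVec u v).trace =
      u 2 * v 2 - (1 / (1 + rpoly n ^ 2)) * (u 0 * v 0 + u 1 * v 1 + u 2 * v 2) := by
  simp only [Ebar, mMix, Matrix.trace, Matrix.diag, Matrix.mul_apply,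
    Fin.sum_univ_three, Matrix.one_apply, Matrix.sub_apply, Matrix.smul_apply,
    Matrix.transpose_apply, vecMulVec_apply, Matrix.cons_val_zero, Matrix.cons_val_one,
    Matrix.head_cons, Matrix.cons_val_two, Matrix.tail_cons, smul_eq_mul]
  norm_num [Fin.ext_iff]
  ring

lemma trace_prod_nonneg (n : ℕ) (i j : ℕ) :
    0 ≤ ((Ebar n)ᵀ * vecMulVec (omegaP n i) (omegaP n j)).trace := by
  have h1 : (0:ℝ) < 1 + rpoly n ^ 2 := by positivity
  have hC := Real.cos_le_one (2 * Real.pi * i / n - 2 * Real.pi * j / n)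
  have hcs := Real.cos_sub (2 * Real.pi * i / n) (2 * Real.pi * j / n)
  have hr2 : (0:ℝ) ≤ rpoly n ^ 2 := sq_nonneg _
  have hc : (0:ℝ) < 1 / (1 + rpoly n ^ 2) := by positivity
  have hone : (1 / (1 + rpoly n ^ 2)) * (1 + rpoly n ^ 2) = 1 := by field_simp
  have main : 0 ≤ 1 - (1 / (1 + rpoly n ^ 2)) *
      (rpoly n ^ 2 * Real.cos (2 * Real.pi * i / n - 2 * Real.pi * j / n) + 1) := by
    nlinarith [mul_nonneg (mul_nonneg hc.le hr2) (sub_nonneg.mpr hC), hone]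
  rw [trace_formula]
  simp only [omegaP, Matrix.cons_val_zero, Matrix.cons_val_one, Matrix.head_cons,
    Matrix.cons_val_two, Matrix.tail_cons]
  calc (0:ℝ) ≤ 1 - (1 / (1 + rpoly n ^ 2)) *
        (rpoly n ^ 2 * Real.cos (2 * Real.pi * i / n - 2 * Real.pi * j / n) + 1) := main
    _ = 1 * 1 - 1 / (1 + rpoly n ^ 2) *
        (rpoly n * Real.cos (2 * Real.pi * ↑i / ↑n) * (rpoly n * Real.cos (2 * Real.pi * ↑j / ↑n)) +
         rpoly n * Real.sin (2 * Real.pi * ↑i / ↑n) * (rpoly n * Real.sin (2 * Real.pi * ↑j / ↑n)) +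
         1 * 1) := by rw [hcs]; ring

lemma trace_Wodd (n : ℕ) (p : ℝ) :
    ((Ebar n)ᵀ * Wodd p).trace = (rpoly n ^ 2 - 2 * p) / (1 + rpoly n ^ 2) := by
  have h1 : (0:ℝ) < 1 + rpoly n ^ 2 := by positivity
  simp only [Ebar, Wodd, mMix, Matrix.trace, Matrix.diag, Matrix.mul_apply,
    Fin.sum_univ_three, Matrix.one_apply, Matrix.sub_apply, Matrix.smul_apply,
    Matrix.add_apply, Matrix.transpose_apply, vecMulVec_apply, Matrix.cons_val_zero,
    Matrix.cons_val_one, Matrix.head_cons, Matrix.cons_val_two, Matrix.tail_cons, smul_eq_mul]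
  norm_num [Fin.ext_iff]
  field_simp
  ring

/-- for odd `n ≥ 5`:
(i) `Tr[Ēᵀ(ω_i ω_jᵀ)] ≥ 0` on every product state;
(ii) `Tr[Ēᵀ W_p] = (r_n² − 2p)/(1+r_n²)`, negative exactly when `p > r_n²/2`;
(iii) for `r_n²/2 < p ≤ 1`, `W_p` is not in the convex hull of the product states,
i.e., it is entangled (and mixed for `p < 1`). -/
theorem odd_gon_werner_entangled (n : ℕ) (hn : 5 ≤ n) (hodd : Odd n) :
    (∀ i ∈ Finset.Icc 1 n, ∀ j ∈ Finset.Icc 1 n,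
      0 ≤ ((Ebar n)ᵀ * vecMulVec (omegaP n i) (omegaP n j)).trace) ∧
    (∀ p : ℝ, p ∈ Set.Icc (0 : ℝ) 1 →
      ((Ebar n)ᵀ * Wodd p).trace = (rpoly n ^ 2 - 2 * p) / (1 + rpoly n ^ 2) ∧
      (((Ebar n)ᵀ * Wodd p).trace < 0 ↔ rpoly n ^ 2 / 2 < p)) ∧
    (∀ p : ℝ, rpoly n ^ 2 / 2 < p → p ≤ 1 →
      Wodd p ∉ convexHull ℝ (productStates n)) := by
  have h1 : (0:ℝ) < 1 + rpoly n ^ 2 := by positivity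
  refine ⟨fun i _ j _ => trace_prod_nonneg n i j, fun p _ => ⟨trace_Wodd n p, ?_⟩, ?_⟩
  · rw [trace_Wodd, div_lt_iff₀ h1, zero_mul]
    constructor <;> intro h <;> linarith
  · intro p hp hp1 hmem
    have hlin : IsLinearMap ℝ (fun Φ : Matrix (Fin 3) (Fin 3) ℝ => ((Ebar n)ᵀ * Φ).trace) :=
      ⟨fun x y => by rw [mul_add, Matrix.trace_add],
       fun c x => by rw [Matrix.mul_smul, Matrix.trace_smul]⟩
    have hconv : Convex ℝ {Φ : Matrix (Fin 3) (Fin 3) ℝ | 0 ≤ ((Ebar n)ᵀ * Φ).trace} :=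
      convex_halfSpace_ge hlin 0
    have hsub : productStates n ⊆ {Φ : Matrix (Fin 3) (Fin 3) ℝ | 0 ≤ ((Ebar n)ᵀ * Φ).trace} := by
      rintro Φ ⟨i, hi, j, hj, rfl⟩
      exact trace_prod_nonneg n i j
    have h0 : 0 ≤ ((Ebar n)ᵀ * Wodd p).trace := convexHull_min hsub hconv hmem
    rw [trace_Wodd] at h0
    have hneg : (rpoly n ^ 2 - 2 * p) / (1 + rpoly n ^ 2) < 0 :=
      div_neg_of_neg_of_pos (by linarith) h1
    linarith
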